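/- Assume that every diagonal entry of B is nonzero and every row of B̃ is nonzero. Let D be the diagonal part of B and R = B − D. Let sequences x₁^(k) ∈ ℝ^m and x₂^(k) ∈ ℝ^p satisfy, for all k ≥ 0: x₂^(k+1) = x₂^(k) + s(B̃)·d^(k) with d^(k)_i = (b_i − B_i·x₁^(k) − B̃_i·x₂^(k))/(m·‖B̃_i‖₁), and x₁^(k+1) = D⁻¹·(−R·x₁^(k) + b − B̃·x₂^(k+1)). If ‖I − B·D⁻¹‖₁ · ‖I − (1/m)·B̃·s(B̃)·N(B̃)⁻¹‖₁ < 1 (ℓ1 operator norms), then the sequence (x₁^(k), x₂^(k)) is a Cauchy sequence in ℝ^m × ℝ^p; hence it converges to a limit (x₁, x₂), and this limit solves the system: B·x₁ + B̃·x₂ = b. -/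

import Mathlib

/-- The ℓ1-norm of a vector: sum of absolute values of its entries. -/
noncomputable def vecL1 {n : ℕ} (v : Fin n → ℝ) : ℝ := ∑ i, |v i|

/-- The ℓ1 operator norm of a matrix: the maximum absolute column sum. -/
noncomputable def matL1 {a c : ℕ} (M : Matrix (Fin a) (Fin c) ℝ) : ℝ :=
  ⨆ j, ∑ i, |M i j|

/-!
One Jacobi step maps the residual `r = b - B x₁ - B̃ x₂` to `(I - B D⁻¹)(I - (1/m) B̃ s N⁻¹) r`,
so by submultiplicativity of the ℓ1 operator norm the residual decays geometrically. Each
increment of `x₁` and of `x₂` is a fixed matrix applied to the current residual, so the increments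
decay geometrically as well and the iterates form a Cauchy sequence. The residual is continuous in
`(x₁, x₂)` and tends to `0`, so it vanishes at the limit.
-/

open Matrix Filter Topology

lemma inv_diagonal_of_ne_zero {n K : Type*} [Fintype n] [DecidableEq n] [Field K] {v : n → K}
    (hv : ∀ i, v i ≠ 0) : (diagonal v)⁻¹ = diagonal fun i => (v i)⁻¹ :=
  inv_eq_left_inv (by simp [diagonal_mul_diagonal, hv])

section L1

lemma vecL1_nonneg {n : ℕ} (v : Fin n → ℝ) : 0 ≤ vecL1 v :=
  Finset.sum_nonneg fun _ _ => abs_nonneg _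

lemma abs_le_vecL1 {n : ℕ} (v : Fin n → ℝ) (i : Fin n) : |v i| ≤ vecL1 v :=
  Finset.single_le_sum (fun j _ => abs_nonneg (v j)) (Finset.mem_univ i)

lemma norm_le_vecL1 {n : ℕ} (v : Fin n → ℝ) : ‖v‖ ≤ vecL1 v :=
  (pi_norm_le_iff_of_nonneg (vecL1_nonneg v)).2 fun i => abs_le_vecL1 v i

lemma sum_abs_le_matL1 {a c : ℕ} (M : Matrix (Fin a) (Fin c) ℝ) (j : Fin c) :
    ∑ i, |M i j| ≤ matL1 M :=
  le_ciSup (f := fun j => ∑ i, |M i j|) (Set.finite_range _).bddAbove j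

lemma matL1_nonneg {a c : ℕ} (M : Matrix (Fin a) (Fin c) ℝ) : 0 ≤ matL1 M :=
  Real.iSup_nonneg fun _ => Finset.sum_nonneg fun _ _ => abs_nonneg _

lemma vecL1_mulVec_le {a c : ℕ} (M : Matrix (Fin a) (Fin c) ℝ) (v : Fin c → ℝ) :
    vecL1 (M *ᵥ v) ≤ matL1 M * vecL1 v :=
  calc vecL1 (M *ᵥ v) = ∑ i, |∑ j, M i j * v j| := rfl
    _ ≤ ∑ i, ∑ j, |M i j| * |v j| :=
        Finset.sum_le_sum fun i _ => (Finset.abs_sum_le_sum_abs _ _).trans_eq (by simp [abs_mul])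
    _ = ∑ j, (∑ i, |M i j|) * |v j| := by rw [Finset.sum_comm]; simp [Finset.sum_mul]
    _ ≤ ∑ j, matL1 M * |v j| :=
        Finset.sum_le_sum fun j _ => by gcongr; exact sum_abs_le_matL1 M j
    _ = matL1 M * vecL1 v := (Finset.mul_sum _ _ _).symm

lemma matL1_mul_le {a b c : ℕ} (M : Matrix (Fin a) (Fin b) ℝ) (M' : Matrix (Fin b) (Fin c) ℝ) :
    matL1 (M * M') ≤ matL1 M * matL1 M' :=
  Real.iSup_le (fun j =>
    calc ∑ i, |(M * M') i j| = vecL1 (M *ᵥ fun k => M' k j) := rfl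
      _ ≤ matL1 M * vecL1 (fun k => M' k j) := vecL1_mulVec_le _ _
      _ ≤ matL1 M * matL1 M' := by gcongr; exacts [matL1_nonneg M, sum_abs_le_matL1 M' j])
    (mul_nonneg (matL1_nonneg M) (matL1_nonneg M'))

section Geometric

variable {n : ℕ} {M : Matrix (Fin n) (Fin n) ℝ} {r : ℕ → Fin n → ℝ}

lemma vecL1_le_pow_mul_of_mulVec (hr : ∀ k, r (k + 1) = M *ᵥ r k) (k : ℕ) :
    vecL1 (r k) ≤ matL1 M ^ k * vecL1 (r 0) := by
  induction k with
  | zero => simp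
  | succ k ih =>
    calc vecL1 (r (k + 1)) ≤ matL1 M * vecL1 (r k) := hr k ▸ vecL1_mulVec_le M (r k)
      _ ≤ matL1 M * (matL1 M ^ k * vecL1 (r 0)) := by gcongr; exact matL1_nonneg M
      _ = matL1 M ^ (k + 1) * vecL1 (r 0) := by ring

lemma tendsto_zero_of_mulVec (hr : ∀ k, r (k + 1) = M *ᵥ r k) (hM : matL1 M < 1) :
    Tendsto r atTop (𝓝 0) := by
  refine squeeze_zero_norm (fun k => (norm_le_vecL1 _).trans (vecL1_le_pow_mul_of_mulVec hr k)) ?_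
  simpa using (tendsto_pow_atTop_nhds_zero_of_lt_one (matL1_nonneg M) hM).mul_const (vecL1 (r 0))

lemma cauchySeq_of_add_mulVec {l : ℕ} {f : ℕ → Fin l → ℝ} (P : Matrix (Fin l) (Fin n) ℝ)
    (hr : ∀ k, r (k + 1) = M *ᵥ r k) (hM : matL1 M < 1) (hf : ∀ k, f (k + 1) = f k + P *ᵥ r k) :
    CauchySeq f := by
  refine cauchySeq_of_le_geometric (matL1 M) (matL1 P * vecL1 (r 0)) hM fun k => ?_
  calc dist (f k) (f (k + 1)) = ‖P *ᵥ r k‖ := by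
        rw [dist_comm, dist_eq_norm, hf, add_sub_cancel_left]
    _ ≤ matL1 P * vecL1 (r k) := (norm_le_vecL1 _).trans (vecL1_mulVec_le P (r k))
    _ ≤ matL1 P * (matL1 M ^ k * vecL1 (r 0)) := by
        gcongr; exacts [matL1_nonneg P, vecL1_le_pow_mul_of_mulVec hr k]
    _ = matL1 P * vecL1 (r 0) * matL1 M ^ k := by ring

end Geometric

end L1

section Residual

variable {ι κ κ' 𝕜 : Type*} [Fintype κ] [Fintype κ'] [CommRing 𝕜]

def blockResidual (B : Matrix ι κ 𝕜) (Bt : Matrix ι κ' 𝕜) (b : ι → 𝕜) (x₁ : κ → 𝕜)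
    (x₂ : κ' → 𝕜) : ι → 𝕜 :=
  b - B *ᵥ x₁ - Bt *ᵥ x₂

lemma blockResidual_eq_zero_iff {B : Matrix ι κ 𝕜} {Bt : Matrix ι κ' 𝕜} {b : ι → 𝕜} {x₁ : κ → 𝕜}
    {x₂ : κ' → 𝕜} : blockResidual B Bt b x₁ x₂ = 0 ↔ B *ᵥ x₁ + Bt *ᵥ x₂ = b := by
  rw [blockResidual, sub_sub, sub_eq_zero, eq_comm]

lemma blockResidual_eq_zero_of_tendsto [TopologicalSpace 𝕜] [IsTopologicalRing 𝕜] [T2Space 𝕜]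
    {α : Type*} {l : Filter α} [l.NeBot] {B : Matrix ι κ 𝕜} {Bt : Matrix ι κ' 𝕜} {b : ι → 𝕜}
    {x₁ : α → κ → 𝕜} {x₂ : α → κ' → 𝕜} {y₁ : κ → 𝕜} {y₂ : κ' → 𝕜}
    (hx : Tendsto (fun k => (x₁ k, x₂ k)) l (𝓝 (y₁, y₂)))
    (hr : Tendsto (fun k => blockResidual B Bt b (x₁ k) (x₂ k)) l (𝓝 0)) :
    blockResidual B Bt b y₁ y₂ = 0 := by
  have hcont : Continuous fun x : (κ → 𝕜) × (κ' → 𝕜) => blockResidual B Bt b x.1 x.2 :=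
    (continuous_const.sub (continuous_const.matrix_mulVec continuous_fst)).sub
      (continuous_const.matrix_mulVec continuous_snd)
  exact tendsto_nhds_unique ((hcont.tendsto _).comp hx) hr

variable [Fintype ι] [DecidableEq ι] {B D : Matrix ι ι 𝕜} {Bt : Matrix ι κ 𝕜} {P : Matrix κ ι 𝕜}
  {b : ι → 𝕜} {x₁ x₁' : ι → 𝕜} {x₂ x₂' : κ → 𝕜}

lemma jacobi_step_eq (hD : D⁻¹ * D = 1) (h₂ : x₂' = x₂ + P *ᵥ blockResidual B Bt b x₁ x₂)
    (h₁ : x₁' = D⁻¹ *ᵥ (-((B - D) *ᵥ x₁) + (b - Bt *ᵥ x₂'))) :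
    x₁' = x₁ + (D⁻¹ * (1 - Bt * P)) *ᵥ blockResidual B Bt b x₁ x₂ := by
  have hrhs : -((B - D) *ᵥ x₁) + (b - Bt *ᵥ x₂') =
      D *ᵥ x₁ + (1 - Bt * P) *ᵥ blockResidual B Bt b x₁ x₂ := by
    rw [h₂, blockResidual]
    simp only [sub_mulVec, one_mulVec, ← mulVec_mulVec, mulVec_add]
    abel
  rw [h₁, hrhs, mulVec_add, mulVec_mulVec, hD, one_mulVec, mulVec_mulVec]

lemma blockResidual_jacobi_step (hD : D⁻¹ * D = 1)
    (h₂ : x₂' = x₂ + P *ᵥ blockResidual B Bt b x₁ x₂)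
    (h₁ : x₁' = D⁻¹ *ᵥ (-((B - D) *ᵥ x₁) + (b - Bt *ᵥ x₂'))) :
    blockResidual B Bt b x₁' x₂' =
      ((1 - B * D⁻¹) * (1 - Bt * P)) *ᵥ blockResidual B Bt b x₁ x₂ := by
  rw [jacobi_step_eq hD h₂ h₁, h₂]
  generalize hr : blockResidual B Bt b x₁ x₂ = r
  obtain rfl : b = r + B *ᵥ x₁ + Bt *ᵥ x₂ := by rw [← hr, blockResidual]; abel
  simp only [blockResidual, sub_mulVec, one_mulVec, ← mulVec_mulVec, mulVec_add, mulVec_sub]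
  abel

end Residual

theorem generalized_jacobi_converges_to_solution_general
    (m p : ℕ)
    (B : Matrix (Fin m) (Fin m) ℝ) (Bt : Matrix (Fin m) (Fin p) ℝ) (b : Fin m → ℝ)
    (hDiag : ∀ i, B i i ≠ 0) (hRows : ∀ i, Bt i ≠ 0)
    (s : Matrix (Fin p) (Fin m) ℝ)
    (N : Matrix (Fin m) (Fin m) ℝ)
    (hN : N = Matrix.diagonal (fun i => ∑ j, |Bt i j|))
    (D : Matrix (Fin m) (Fin m) ℝ) (hD : D = Matrix.diagonal (fun i => B i i))
    (R : Matrix (Fin m) (Fin m) ℝ) (hR : R = B - D)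
    (x₁ : ℕ → Fin m → ℝ) (x₂ : ℕ → Fin p → ℝ)
    (d : ℕ → Fin m → ℝ)
    (hd : ∀ k i, d k i = (b i - (B.mulVec (x₁ k)) i - (Bt.mulVec (x₂ k)) i) /
      ((m : ℝ) * ∑ j, |Bt i j|))
    (hx₂ : ∀ k, x₂ (k + 1) = x₂ k + s.mulVec (d k))
    (hx₁ : ∀ k, x₁ (k + 1) = D⁻¹.mulVec (-(R.mulVec (x₁ k)) + (b - Bt.mulVec (x₂ (k + 1)))))
    (hq1 : matL1 (1 - B * D⁻¹) * matL1 (1 - (1 / (m : ℝ)) • (Bt * s * N⁻¹)) < 1) :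
    CauchySeq (fun k => (x₁ k, x₂ k)) ∧
    ∃ y₁ : Fin m → ℝ, ∃ y₂ : Fin p → ℝ,
      Filter.Tendsto (fun k => (x₁ k, x₂ k)) Filter.atTop (nhds (y₁, y₂)) ∧
      B.mulVec y₁ + Bt.mulVec y₂ = b := by
  subst hR
  set P := (1 / (m : ℝ)) • (s * N⁻¹)
  set r := fun k => blockResidual B Bt b (x₁ k) (x₂ k)
  have hBtP : Bt * P = (1 / (m : ℝ)) • (Bt * s * N⁻¹) := by
    rw [Matrix.mul_smul, Matrix.mul_assoc]
  have hDD : D⁻¹ * D = 1 := by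
    simp [hD, inv_diagonal_of_ne_zero hDiag, diagonal_mul_diagonal, hDiag]
  have hNr (i) : ∑ j, |Bt i j| ≠ 0 := by
    simpa [Finset.sum_eq_zero_iff_of_nonneg, funext_iff] using hRows i
  have hdr k : d k = (1 / (m : ℝ)) • N⁻¹ *ᵥ r k := by
    ext i
    simp [hd, hN, inv_diagonal_of_ne_zero hNr, mulVec_diagonal, r, blockResidual, div_eq_mul_inv]
    ring
  have hstep₂ k : x₂ (k + 1) = x₂ k + P *ᵥ r k := by
    rw [hx₂ k, hdr k, mulVec_smul, mulVec_mulVec, smul_mulVec]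
  have hstep₁ k := jacobi_step_eq hDD (hstep₂ k) (hx₁ k)
  have hr k : r (k + 1) = _ := blockResidual_jacobi_step hDD (hstep₂ k) (hx₁ k)
  have hq : matL1 ((1 - B * D⁻¹) * (1 - Bt * P)) < 1 :=
    (matL1_mul_le _ _).trans_lt (hBtP ▸ hq1)
  have hcauchy : CauchySeq fun k => (x₁ k, x₂ k) :=
    (cauchySeq_of_add_mulVec _ hr hq hstep₁).prodMk (cauchySeq_of_add_mulVec _ hr hq hstep₂)
  refine ⟨hcauchy, ?_⟩
  obtain ⟨⟨y₁, y₂⟩, hy⟩ := cauchySeq_tendsto_of_complete hcauchy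
  exact ⟨y₁, y₂, hy, blockResidual_eq_zero_iff.1
    (blockResidual_eq_zero_of_tendsto hy (tendsto_zero_of_mulVec hr hq))⟩

/-- if `‖I − B D⁻¹‖₁ ‖I − (1/m) B̃ s N⁻¹‖₁ < 1`, then the generalized
Jacobi iterates form a Cauchy sequence, hence converge to a limit `(y₁, y₂)`, and
that limit solves `B y₁ + B̃ y₂ = b`. -/
theorem generalized_jacobi_converges_to_solution
    (m p : ℕ) (hm : 0 < m) (hp : 0 < p)
    (B : Matrix (Fin m) (Fin m) ℝ) (Bt : Matrix (Fin m) (Fin p) ℝ) (b : Fin m → ℝ)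
    (hDiag : ∀ i, B i i ≠ 0) (hRows : ∀ i, Bt i ≠ 0)
    (s : Matrix (Fin p) (Fin m) ℝ) (hs : ∀ j i, s j i = Real.sign (Bt i j))
    (N : Matrix (Fin m) (Fin m) ℝ)
    (hN : N = Matrix.diagonal (fun i => ∑ j, |Bt i j|))
    (D : Matrix (Fin m) (Fin m) ℝ) (hD : D = Matrix.diagonal (fun i => B i i))
    (R : Matrix (Fin m) (Fin m) ℝ) (hR : R = B - D)
    (x₁ : ℕ → Fin m → ℝ) (x₂ : ℕ → Fin p → ℝ)
    (d : ℕ → Fin m → ℝ)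
    (hd : ∀ k i, d k i = (b i - (B.mulVec (x₁ k)) i - (Bt.mulVec (x₂ k)) i) /
      ((m : ℝ) * ∑ j, |Bt i j|))
    (hx₂ : ∀ k, x₂ (k + 1) = x₂ k + s.mulVec (d k))
    (hx₁ : ∀ k, x₁ (k + 1) = D⁻¹.mulVec (-(R.mulVec (x₁ k)) + (b - Bt.mulVec (x₂ (k + 1)))))
    (hq1 : matL1 (1 - B * D⁻¹) * matL1 (1 - (1 / (m : ℝ)) • (Bt * s * N⁻¹)) < 1) :
    CauchySeq (fun k => (x₁ k, x₂ k)) ∧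
    ∃ y₁ : Fin m → ℝ, ∃ y₂ : Fin p → ℝ,
      Filter.Tendsto (fun k => (x₁ k, x₂ k)) Filter.atTop (nhds (y₁, y₂)) ∧
      B.mulVec y₁ + Bt.mulVec y₂ = b :=
  generalized_jacobi_converges_to_solution_general m p B Bt b hDiag hRows s N hN D hD R hR x₁ x₂ d
    hd hx₂ hx₁ hq1
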